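/- Let n ≥ 2 be an integer and let μ = j_{n/2−1,1} be the smallest positive zero of J_{n/2−1}. Then there is a unique ρ_n ∈ (0, μ) such that ρ_n J_{n/2−1}(ρ_n) − (n−1) J_{n/2}(ρ_n) = 0; moreover t J_{n/2−1}(t) − (n−1) J_{n/2}(t) > 0 for t ∈ (0, ρ_n) and t J_{n/2−1}(t) − (n−1) J_{n/2}(t) < 0 for t ∈ (ρ_n, μ). -/

import Mathlib

/-!
Write `J_ν(t) = (t/2)^ν S_ν(t²/4)`, where `S_ν(y) = ∑ (-1)^k y^k / (k! Γ(ν+k+1))` is entire,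
`S_ν' = -S_{ν+1}` and `(ν+1) S_{ν+1}(y) - S_ν(y) = y S_{ν+2}(y)`. With `ν = n/2 - 1` and
`Φ = 2 S_ν - (2ν+1) S_{ν+1}` we get `t J_ν(t) - (2ν+1) J_{ν+1}(t) = (t/2)^(ν+1) Φ(t²/4)`.

Below the first zero `μ` of `J_ν`, `S_ν(t²/4) > 0`; hence `S_{ν+1}(t²/4) > 0` on `(0, μ]`, because
`t^(2ν+2) S_{ν+1}(t²/4)` vanishes at `0` and has derivative `2 t^(2ν+1) S_ν(t²/4)`. The function
`G(t) = t^(2ν+1) Φ(t²/4)` vanishes at `0` and has derivative `t^(2ν) (2ν+1 - t²) S_{ν+1}(t²/4)`,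
so it increases up to `√(2ν+1)` and decreases afterwards, while `G(μ) < 0` since `S_ν(μ²/4) = 0`.
So `G` has exactly one zero in `(0, μ)`, where it changes sign from `+` to `-`.
-/

open MeasureTheory Set Filter

/-- Bessel function of the first kind of order `ν`, defined by its power series
(real exponents; intended for `x > 0`). -/
noncomputable def besselJ (ν x : ℝ) : ℝ :=
  ∑' k : ℕ, ((-1 : ℝ) ^ k / (Nat.factorial k * Real.Gamma (ν + k + 1))) *
    (x / 2) ^ (2 * (k : ℝ) + ν)

theorem pos_of_continuousOn_of_ne_zero {f : ℝ → ℝ} {a b : ℝ} (hf : ContinuousOn f (Ico a b))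
    (ha : 0 < f a) (hne : ∀ x ∈ Ioo a b, f x ≠ 0) : ∀ x ∈ Ico a b, 0 < f x := by
  rintro x ⟨hax, hxb⟩
  rcases hax.eq_or_lt with rfl | hax
  · exact ha
  by_contra! hfx
  obtain ⟨z, hz, hfz⟩ : ∃ z ∈ Icc a x, f z = 0 :=
    intermediate_value_Icc' hax.le (hf.mono (Icc_subset_Ico_right hxb)) ⟨hfx, ha.le⟩
  have haz : a < z := hz.1.lt_of_ne (by rintro rfl; exact ha.ne' hfz)
  exact hne z ⟨haz, hz.2.trans_lt hxb⟩ hfz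

theorem exists_zero_of_hasDerivAt_pos_of_neg {f f' : ℝ → ℝ} {a b c : ℝ} (hab : a < b) (hac : a < c)
    (hf : ContinuousOn f (Icc a b)) (hd : ∀ x ∈ Ioo a b, HasDerivAt f (f' x) x)
    (hpos : ∀ x ∈ Ioo a b, x < c → 0 < f' x) (hneg : ∀ x ∈ Ioo a b, c < x → f' x < 0)
    (ha : f a = 0) (hb : f b < 0) :
    ∃ ρ ∈ Ioo a b, f ρ = 0 ∧ (∀ x ∈ Ioo a ρ, 0 < f x) ∧ ∀ x ∈ Ioo ρ b, f x < 0 := by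
  have hmono : ∀ d ≤ c, d ≤ b → StrictMonoOn f (Icc a d) := fun d hdc hdb =>
    strictMonoOn_of_hasDerivWithinAt_pos (convex_Icc a d) (hf.mono (Icc_subset_Icc_right hdb))
      (fun x hx => by
        rw [interior_Icc] at hx ⊢
        exact (hd x ⟨hx.1, hx.2.trans_le hdb⟩).hasDerivWithinAt)
      (fun x hx => by
        rw [interior_Icc] at hx
        exact hpos x ⟨hx.1, hx.2.trans_le hdb⟩ (hx.2.trans_le hdc))
  have hcb : c < b := by
    by_contra! hbc
    have := hmono b hbc le_rfl (left_mem_Icc.2 hab.le) (right_mem_Icc.2 hab.le) hab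
    linarith
  have hanti : StrictAntiOn f (Icc c b) :=
    strictAntiOn_of_hasDerivWithinAt_neg (convex_Icc c b) (hf.mono (Icc_subset_Icc_left hac.le))
      (fun x hx => by
        rw [interior_Icc] at hx ⊢
        exact (hd x ⟨hac.trans hx.1, hx.2⟩).hasDerivWithinAt)
      (fun x hx => by
        rw [interior_Icc] at hx
        exact hneg x ⟨hac.trans hx.1, hx.2⟩ hx.1)
  have hfc : 0 < f c :=
    ha ▸ hmono c le_rfl hcb.le (left_mem_Icc.2 hac.le) (right_mem_Icc.2 hac.le) hac
  obtain ⟨ρ, hρ, hfρ⟩ : ∃ ρ ∈ Icc c b, f ρ = 0 :=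
    intermediate_value_Icc' hcb.le (hf.mono (Icc_subset_Icc_left hac.le)) ⟨hb.le, hfc.le⟩
  have hcρ : c < ρ := hρ.1.lt_of_ne (by rintro rfl; linarith)
  have hρb : ρ < b := hρ.2.lt_of_ne (by rintro rfl; linarith)
  refine ⟨ρ, ⟨hac.trans hcρ, hρb⟩, hfρ, fun x hx => ?_, fun x hx => ?_⟩
  · rcases le_or_gt x c with hxc | hxc
    · exact ha ▸ hmono c le_rfl hcb.le (left_mem_Icc.2 hac.le) ⟨hx.1.le, hxc⟩ hx.1
    · exact hfρ ▸ hanti ⟨hxc.le, (hx.2.trans hρb).le⟩ ⟨hcρ.le, hρb.le⟩ hx.2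
  · exact hfρ ▸ hanti ⟨hcρ.le, hρb.le⟩ ⟨(hcρ.trans hx.1).le, hx.2.le⟩ hx.1

theorem hasDerivAt_tsum_mul_pow {a : ℕ → ℝ} (ha : ∀ r : ℝ, Summable fun k => ‖a k‖ * r ^ k)
    (y : ℝ) :
    HasDerivAt (fun z => ∑' k, a k * z ^ k) (∑' k, (k + 1) * a (k + 1) * y ^ k) y := by
  set R := |y| + 1
  have hR : 1 ≤ R := le_add_of_nonneg_left (abs_nonneg y)
  have hy : y ∈ Ioo (-R) R := ⟨by linarith [neg_abs_le y], by linarith [le_abs_self y]⟩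
  have hbound : ∀ k, ∀ z ∈ Ioo (-R) R, ‖a k * (k * z ^ (k - 1))‖ ≤ ‖a k‖ * (2 * R) ^ k := by
    intro k z hz
    have hzR : |z| ≤ R := abs_le.2 ⟨hz.1.le, hz.2.le⟩
    rw [norm_mul, norm_mul, mul_pow, Real.norm_natCast, norm_pow, Real.norm_eq_abs]
    gcongr
    · exact_mod_cast k.lt_two_pow_self.le
    · calc |z| ^ (k - 1) ≤ R ^ (k - 1) := by gcongr
        _ ≤ R ^ k := pow_le_pow_right₀ hR (k.sub_le 1)
  have hsum : Summable fun k => a k * y ^ k :=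
    .of_norm ((ha |y|).congr fun k => by simp only [norm_mul, norm_pow, Real.norm_eq_abs])
  have hderiv := hasDerivAt_tsum_of_isPreconnected (ha (2 * R)) isOpen_Ioo isPreconnected_Ioo
    (fun k z _ => (hasDerivAt_pow k z).const_mul (a k)) hbound hy hsum hy
  rw [Summable.tsum_eq_zero_add (.of_norm_bounded (ha (2 * R)) (hbound · y hy))] at hderiv
  refine hderiv.congr_deriv ?_
  simp only [Nat.cast_zero, zero_mul, mul_zero, zero_add, Nat.add_sub_cancel, Nat.cast_add,
    Nat.cast_one]
  exact tsum_congr fun k => by ring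

noncomputable def besselCoeff (ν : ℝ) (k : ℕ) : ℝ :=
  (-1) ^ k / (Nat.factorial k * Real.Gamma (ν + k + 1))

noncomputable def besselS (ν y : ℝ) : ℝ := ∑' k, besselCoeff ν k * y ^ k

theorem Real.Gamma_le_Gamma_add_nat {s : ℝ} (hs : 1 ≤ s) (k : ℕ) :
    Real.Gamma s ≤ Real.Gamma (s + k) := by
  induction k with
  | zero => simp
  | succ k ih =>
    have hΓ : 0 < Real.Gamma (s + k) := Real.Gamma_pos_of_pos (by positivity)
    rw [Nat.cast_succ, ← add_assoc, Real.Gamma_add_one (by positivity)]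
    nlinarith [(k.cast_nonneg : (0 : ℝ) ≤ k)]

theorem norm_besselCoeff_le {ν : ℝ} (hν : 0 ≤ ν) (k : ℕ) :
    ‖besselCoeff ν k‖ ≤ (Real.Gamma (ν + 1))⁻¹ * (k.factorial : ℝ)⁻¹ := by
  have hΓ : Real.Gamma (ν + 1) ≤ Real.Gamma (ν + k + 1) := by
    rw [add_right_comm]
    exact Real.Gamma_le_Gamma_add_nat (by linarith) k
  have hΓ₀ : 0 < Real.Gamma (ν + 1) := Real.Gamma_pos_of_pos (by linarith)
  rw [besselCoeff, norm_div, norm_pow, norm_neg, norm_one, one_pow,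
    Real.norm_of_nonneg (by positivity), one_div, ← mul_inv, mul_comm]
  gcongr

theorem summable_norm_besselCoeff_mul_pow {ν : ℝ} (hν : 0 ≤ ν) (r : ℝ) :
    Summable fun k => ‖besselCoeff ν k‖ * r ^ k := by
  refine .of_norm_bounded ((Real.summable_pow_div_factorial |r|).mul_left
    (Real.Gamma (ν + 1))⁻¹) fun k => ?_
  simp only [norm_mul, norm_pow, Real.norm_eq_abs, abs_abs]
  rw [mul_div_assoc', div_eq_mul_inv, mul_right_comm]
  gcongr
  exact norm_besselCoeff_le hν k

theorem summable_besselCoeff_mul_pow {ν : ℝ} (hν : 0 ≤ ν) (y : ℝ) :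
    Summable fun k => besselCoeff ν k * y ^ k :=
  .of_norm ((summable_norm_besselCoeff_mul_pow hν |y|).congr fun k => by
    simp only [norm_mul, norm_pow, Real.norm_eq_abs])

theorem succ_mul_besselCoeff_succ (ν : ℝ) (k : ℕ) :
    (k + 1) * besselCoeff ν (k + 1) = -besselCoeff (ν + 1) k := by
  rw [besselCoeff, besselCoeff, Nat.factorial_succ, pow_succ]
  push_cast
  rw [show ν + ((k : ℝ) + 1) + 1 = ν + 1 + k + 1 by ring]
  field_simp

theorem besselCoeff_eq_mul_besselCoeff_add_one {ν : ℝ} (hν : -1 < ν) (k : ℕ) :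
    besselCoeff ν k = (ν + k + 1) * besselCoeff (ν + 1) k := by
  have hs : 0 < ν + k + 1 := by linarith [(k.cast_nonneg : (0 : ℝ) ≤ k)]
  rw [besselCoeff, besselCoeff, show ν + 1 + k + 1 = ν + k + 1 + 1 by ring,
    Real.Gamma_add_one hs.ne']
  have := Real.Gamma_pos_of_pos hs
  field_simp

theorem hasDerivAt_besselS {ν : ℝ} (hν : 0 ≤ ν) (y : ℝ) :
    HasDerivAt (besselS ν) (-besselS (ν + 1) y) y := by
  have h := hasDerivAt_tsum_mul_pow (summable_norm_besselCoeff_mul_pow hν) y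
  simp only [succ_mul_besselCoeff_succ, neg_mul, tsum_neg] at h
  exact h

theorem continuous_besselS {ν : ℝ} (hν : 0 ≤ ν) : Continuous (besselS ν) :=
  continuous_iff_continuousAt.2 fun y => (hasDerivAt_besselS hν y).continuousAt

theorem besselS_recurrence {ν : ℝ} (hν : 0 ≤ ν) (y : ℝ) :
    (ν + 1) * besselS (ν + 1) y - besselS ν y = y * besselS (ν + 2) y := by
  have h₁ := (summable_besselCoeff_mul_pow (ν := ν + 1) (by linarith) y).mul_left (ν + 1)
  have h₀ := summable_besselCoeff_mul_pow hν y
  have hterm : ∀ k : ℕ, (ν + 1) * (besselCoeff (ν + 1) k * y ^ k) - besselCoeff ν k * y ^ k =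
      -(k * besselCoeff (ν + 1) k * y ^ k) := fun k => by
    rw [besselCoeff_eq_mul_besselCoeff_add_one (ν := ν) (by linarith) k]
    ring
  simp only [besselS]
  rw [← tsum_mul_left, ← h₁.tsum_sub h₀, tsum_congr hterm,
    ((h₁.sub h₀).congr hterm).tsum_eq_zero_add, ← tsum_mul_left]
  simp only [Nat.cast_zero, zero_mul, neg_zero, zero_add, Nat.cast_add, Nat.cast_one, pow_succ,
    ← mul_assoc, succ_mul_besselCoeff_succ, show ν + 1 + 1 = ν + 2 by ring]
  exact tsum_congr fun k => by ring

theorem besselS_zero (ν : ℝ) : besselS ν 0 = (Real.Gamma (ν + 1))⁻¹ := by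
  rw [besselS, tsum_eq_single 0 fun k hk => by simp [hk]]
  simp [besselCoeff]

theorem besselJ_eq_rpow_mul_besselS (ν : ℝ) {x : ℝ} (hx : 0 < x) :
    besselJ ν x = (x / 2) ^ ν * besselS ν (x ^ 2 / 4) := by
  rw [besselJ, besselS, ← tsum_mul_left]
  refine tsum_congr fun k => ?_
  rw [show 2 * (k : ℝ) + ν = ((2 * k : ℕ) : ℝ) + ν by push_cast; ring,
    Real.rpow_add (by positivity), Real.rpow_natCast, pow_mul, besselCoeff]
  ring

theorem hasDerivAt_besselS_sq_div_four {ν : ℝ} (hν : 0 ≤ ν) (t : ℝ) :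
    HasDerivAt (fun t => besselS ν (t ^ 2 / 4)) (-(t / 2) * besselS (ν + 1) (t ^ 2 / 4)) t := by
  have h := (hasDerivAt_besselS hν (t ^ 2 / 4)).comp t ((hasDerivAt_pow 2 t).div_const 4)
  refine h.congr_deriv ?_
  push_cast
  ring

theorem besselS_succ_sq_div_four_pos {ν M : ℝ} (hν : 0 ≤ ν)
    (hS : ∀ t ∈ Ioo 0 M, 0 < besselS ν (t ^ 2 / 4)) :
    ∀ t ∈ Ioc 0 M, 0 < besselS (ν + 1) (t ^ 2 / 4) := by
  set P := fun t : ℝ => t ^ (2 * ν + 2) * besselS (ν + 1) (t ^ 2 / 4)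
  have hderiv : ∀ t ∈ Ioo 0 M, HasDerivAt P (2 * t ^ (2 * ν + 1) * besselS ν (t ^ 2 / 4)) t := by
    intro t ht
    have hpow := Real.hasDerivAt_rpow_const (p := 2 * ν + 2) (Or.inl ht.1.ne')
    have hrec := besselS_recurrence hν (t ^ 2 / 4)
    have hsplit : t ^ (2 * ν + 2) = t ^ (2 * ν + 1) * t := by
      rw [← Real.rpow_add_one ht.1.ne']
      ring_nf
    refine (hpow.mul (hasDerivAt_besselS_sq_div_four (by linarith) t)).congr_deriv ?_
    rw [show 2 * ν + 2 - 1 = 2 * ν + 1 by ring, show ν + 1 + 1 = ν + 2 by ring]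
    linear_combination
      (2 * t ^ (2 * ν + 1)) * hrec - (t / 2 * besselS (ν + 2) (t ^ 2 / 4)) * hsplit
  intro t ht
  have hmono : StrictMonoOn P (Icc 0 M) :=
    strictMonoOn_of_hasDerivWithinAt_pos (convex_Icc 0 M)
      ((Real.continuous_rpow_const (by linarith)).mul
        ((continuous_besselS (by linarith)).comp (by fun_prop))).continuousOn
      (fun x hx => by
        rw [interior_Icc] at hx ⊢
        exact (hderiv x hx).hasDerivWithinAt)
      (fun x hx => by
        rw [interior_Icc] at hx
        exact mul_pos (mul_pos two_pos (Real.rpow_pos_of_pos hx.1 _)) (hS x hx))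
  have hP := hmono (left_mem_Icc.2 (ht.1.le.trans ht.2)) ⟨ht.1.le, ht.2⟩ ht.1
  simp only [P, Real.zero_rpow (by positivity : 2 * ν + 2 ≠ 0), zero_mul] at hP
  exact (mul_pos_iff_of_pos_left (Real.rpow_pos_of_pos ht.1 _)).1 hP

noncomputable def besselPhi (ν y : ℝ) : ℝ := 2 * besselS ν y - (2 * ν + 1) * besselS (ν + 1) y

theorem mul_besselJ_sub_eq (ν : ℝ) {t : ℝ} (ht : 0 < t) :
    t * besselJ ν t - (2 * ν + 1) * besselJ (ν + 1) t =
      (t / 2) ^ (ν + 1) * besselPhi ν (t ^ 2 / 4) := by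
  rw [besselJ_eq_rpow_mul_besselS ν ht, besselJ_eq_rpow_mul_besselS (ν + 1) ht, besselPhi,
    Real.rpow_add_one (by positivity)]
  ring

theorem hasDerivAt_rpow_mul_besselPhi {ν t : ℝ} (hν : 0 ≤ ν) (ht : 0 < t) :
    HasDerivAt (fun t => t ^ (2 * ν + 1) * besselPhi ν (t ^ 2 / 4))
      (t ^ (2 * ν) * (2 * ν + 1 - t ^ 2) * besselS (ν + 1) (t ^ 2 / 4)) t := by
  have hpow := Real.hasDerivAt_rpow_const (p := 2 * ν + 1) (Or.inl ht.ne')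
  have hΦ := ((hasDerivAt_besselS_sq_div_four hν t).const_mul 2).sub
    ((hasDerivAt_besselS_sq_div_four (ν := ν + 1) (by linarith) t).const_mul (2 * ν + 1))
  have hrec := besselS_recurrence hν (t ^ 2 / 4)
  refine (hpow.mul hΦ).congr_deriv ?_
  rw [Pi.sub_apply, add_sub_cancel_right, Real.rpow_add_one ht.ne', show ν + 1 + 1 = ν + 2 by ring]
  linear_combination (-2 * (2 * ν + 1) * t ^ (2 * ν)) * hrec

theorem besselPhi_sign_change {ν μ : ℝ} (hν : 0 ≤ ν) (hμ : 0 < μ)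
    (hSμ : besselS ν (μ ^ 2 / 4) = 0) (hS : ∀ t ∈ Ioo 0 μ, besselS ν (t ^ 2 / 4) ≠ 0) :
    ∃ ρ ∈ Ioo 0 μ, besselPhi ν (ρ ^ 2 / 4) = 0 ∧ (∀ t ∈ Ioo 0 ρ, 0 < besselPhi ν (t ^ 2 / 4)) ∧
      ∀ t ∈ Ioo ρ μ, besselPhi ν (t ^ 2 / 4) < 0 := by
  have hcont : ∀ ν' : ℝ, 0 ≤ ν' → Continuous fun t : ℝ => besselS ν' (t ^ 2 / 4) :=
    fun ν' hν' => (continuous_besselS hν').comp (by fun_prop)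
  have hS₀ : 0 < besselS ν ((0 : ℝ) ^ 2 / 4) := by
    simpa [besselS_zero] using Real.Gamma_pos_of_pos (by linarith : 0 < ν + 1)
  have hSpos := pos_of_continuousOn_of_ne_zero (hcont ν hν).continuousOn hS₀ hS
  have hS₁ := besselS_succ_sq_div_four_pos hν fun t ht => hSpos t (Ioo_subset_Ico_self ht)
  have hG₀ : (0 : ℝ) ^ (2 * ν + 1) * besselPhi ν (0 ^ 2 / 4) = 0 := by
    rw [Real.zero_rpow (by positivity), zero_mul]
  have hGμ : μ ^ (2 * ν + 1) * besselPhi ν (μ ^ 2 / 4) < 0 := by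
    refine mul_neg_of_pos_of_neg (Real.rpow_pos_of_pos hμ _) ?_
    rw [besselPhi, hSμ]
    nlinarith [hS₁ μ ⟨hμ, le_rfl⟩]
  obtain ⟨ρ, hρ, hzero, hpos, hneg⟩ := exists_zero_of_hasDerivAt_pos_of_neg hμ
    (Real.sqrt_pos.2 (by linarith : (0 : ℝ) < 2 * ν + 1))
    ((Real.continuous_rpow_const (by linarith)).mul
      (((hcont ν hν).const_mul 2).sub ((hcont (ν + 1) (by linarith)).const_mul _))).continuousOn
    (fun t ht => hasDerivAt_rpow_mul_besselPhi hν ht.1)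
    (fun t ht htc => mul_pos (mul_pos (Real.rpow_pos_of_pos ht.1 _)
      (sub_pos.2 ((Real.lt_sqrt ht.1.le).1 htc))) (hS₁ t ⟨ht.1, ht.2.le⟩))
    (fun t ht htc => mul_neg_of_neg_of_pos (mul_neg_of_pos_of_neg (Real.rpow_pos_of_pos ht.1 _)
      (sub_neg.2 ((Real.sqrt_lt' ht.1).1 htc))) (hS₁ t ⟨ht.1, ht.2.le⟩)) hG₀ hGμ
  have hfac : ∀ t : ℝ, 0 < t → 0 < t ^ (2 * ν + 1) := fun t ht => Real.rpow_pos_of_pos ht _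
  exact ⟨ρ, hρ, (mul_eq_zero.1 hzero).resolve_left (hfac ρ hρ.1).ne',
    fun t ht => (mul_pos_iff_of_pos_left (hfac t ht.1)).1 (hpos t ht),
    fun t ht => neg_of_mul_neg_right (hneg t ht) (hfac t (hρ.1.trans ht.1)).le⟩

/-- there is a unique `ρₙ ∈ (0, μ)` with
`ρₙ J_{n/2−1}(ρₙ) − (n−1) J_{n/2}(ρₙ) = 0`, and `t J_{n/2−1}(t) − (n−1) J_{n/2}(t)`
is positive on `(0, ρₙ)` and negative on `(ρₙ, μ)`. -/
theorem unique_critical_point (n : ℕ) (hn : 2 ≤ n) (μ : ℝ)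
    (hμ : IsLeast {x : ℝ | 0 < x ∧ besselJ ((n : ℝ) / 2 - 1) x = 0} μ) :
    ∃ ρₙ ∈ Set.Ioo (0 : ℝ) μ,
      ρₙ * besselJ ((n : ℝ) / 2 - 1) ρₙ - ((n : ℝ) - 1) * besselJ ((n : ℝ) / 2) ρₙ = 0 ∧
      (∀ t ∈ Set.Ioo (0 : ℝ) ρₙ,
        0 < t * besselJ ((n : ℝ) / 2 - 1) t - ((n : ℝ) - 1) * besselJ ((n : ℝ) / 2) t) ∧
      (∀ t ∈ Set.Ioo ρₙ μ,
        t * besselJ ((n : ℝ) / 2 - 1) t - ((n : ℝ) - 1) * besselJ ((n : ℝ) / 2) t < 0) ∧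
      ∀ ρ' ∈ Set.Ioo (0 : ℝ) μ,
        ρ' * besselJ ((n : ℝ) / 2 - 1) ρ' - ((n : ℝ) - 1) * besselJ ((n : ℝ) / 2) ρ' = 0 →
        ρ' = ρₙ := by
  set ν : ℝ := (n : ℝ) / 2 - 1 with hν_def
  have hν : 0 ≤ ν := by
    have : (2 : ℝ) ≤ n := by exact_mod_cast hn
    linarith
  rw [show (n : ℝ) / 2 = ν + 1 by ring, show (n : ℝ) - 1 = 2 * ν + 1 by ring]
  obtain ⟨⟨hμ₀, hJμ⟩, hμ_least⟩ := hμ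
  have hSμ : besselS ν (μ ^ 2 / 4) = 0 := by
    rw [besselJ_eq_rpow_mul_besselS ν hμ₀] at hJμ
    exact (mul_eq_zero.1 hJμ).resolve_left (Real.rpow_pos_of_pos (by positivity) ν).ne'
  have hS : ∀ t ∈ Ioo 0 μ, besselS ν (t ^ 2 / 4) ≠ 0 := fun t ht hSt =>
    (hμ_least ⟨ht.1, by rw [besselJ_eq_rpow_mul_besselS ν ht.1, hSt, mul_zero]⟩).not_gt ht.2
  obtain ⟨ρ, hρ, hzero, hpos, hneg⟩ := besselPhi_sign_change hν hμ₀ hSμ hS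
  have hfac : ∀ t : ℝ, 0 < t → 0 < (t / 2) ^ (ν + 1) := fun t ht => by positivity
  refine ⟨ρ, hρ, ?_, fun t ht => ?_, fun t ht => ?_, fun ρ' hρ' hρ'_zero => ?_⟩
  · rw [mul_besselJ_sub_eq ν hρ.1, hzero, mul_zero]
  · rw [mul_besselJ_sub_eq ν ht.1]
    exact mul_pos (hfac t ht.1) (hpos t ht)
  · rw [mul_besselJ_sub_eq ν (hρ.1.trans ht.1)]
    exact mul_neg_of_pos_of_neg (hfac t (hρ.1.trans ht.1)) (hneg t ht)
  · rw [mul_besselJ_sub_eq ν hρ'.1] at hρ'_zero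
    have hΦ := (mul_eq_zero.1 hρ'_zero).resolve_left (hfac ρ' hρ'.1).ne'
    rcases lt_trichotomy ρ' ρ with h | h | h
    · exact absurd hΦ (hpos ρ' ⟨hρ'.1, h⟩).ne'
    · exact h
    · exact absurd hΦ (hneg ρ' ⟨h, hρ'.2⟩).ne
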